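/- arXiv:1404.0825 — 4 statements merged into one kernel-verified Lean document; each statement's English description precedes it below -/
import Mathlib

section
/- Let ψ ∈ H¹(ℝ^{3N}) with ‖ψ‖_{L²} = 1, and define ρ_ψ(x) = N ∫ |ψ(x, x₂,…,x_N)|² dx₂…dx_N and jᵖ_ψ(x) = N Im ∫ conj(ψ) ∇ₓψ dx₂…dx_N. Then ∫_{ℝ³} |jᵖ_ψ|² ρ_ψ^{-1} ≤ N ∫_{ℝ^{3N}} |∇₁ψ|², where the integrand is interpreted as 0 where ρ_ψ = 0. -/
open MeasureTheory
open scoped ENNReal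

/-!
Pointwise in `x`, Cauchy–Schwarz in `y` gives
`(∫ Im(conj ψ ∂ᵢψ) dy)² ≤ (∫ |ψ|² dy) (∫ |∂ᵢψ|² dy)`; dividing by `∫ |ψ|² dy`, summing over `i`
and integrating in `x` (Tonelli) yields the bound. Where `∫ |ψ(x, ·)|² = 0`, or where
`|ψ(x, ·)|²` is not integrable (so that its Bochner integral is `0`), the integrand on the left
is `0` by real division by zero.
-/

lemma ENNReal.ofReal_norm_sq {E : Type*} [SeminormedAddGroup E] (c : E) :
    ENNReal.ofReal (‖c‖ ^ 2) = ‖c‖ₑ ^ 2 := by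
  rw [ENNReal.ofReal_pow (norm_nonneg c), ofReal_norm]

section CauchySchwarz

variable {α : Type*} [MeasurableSpace α] {μ : Measure α}

lemma ENNReal.lintegral_mul_sq_le {f g : α → ℝ≥0∞} (hf : AEMeasurable f μ)
    (hg : AEMeasurable g μ) :
    (∫⁻ a, f a * g a ∂μ) ^ 2 ≤ (∫⁻ a, f a ^ 2 ∂μ) * ∫⁻ a, g a ^ 2 ∂μ := by
  have holder := ENNReal.lintegral_mul_le_Lp_mul_Lq μ Real.HolderConjugate.two_two hf hg
  simp only [Pi.mul_apply, ENNReal.rpow_two] at holder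
  have sq_rpow_half (x : ℝ≥0∞) : (x ^ (1 / 2 : ℝ)) ^ 2 = x := by
    simpa using ENNReal.rpow_inv_rpow two_ne_zero x
  calc (∫⁻ a, f a * g a ∂μ) ^ 2
      ≤ ((∫⁻ a, f a ^ 2 ∂μ) ^ (1 / 2 : ℝ) * (∫⁻ a, g a ^ 2 ∂μ) ^ (1 / 2 : ℝ)) ^ 2 := by
        gcongr
    _ = (∫⁻ a, f a ^ 2 ∂μ) * ∫⁻ a, g a ^ 2 ∂μ := by rw [mul_pow, sq_rpow_half, sq_rpow_half]

lemma ofReal_sq_integral_im_conj_mul_le {f g : α → ℂ} (hf : AEMeasurable f μ)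
    (hg : AEMeasurable g μ) :
    ENNReal.ofReal ((∫ a, (starRingEnd ℂ (f a) * g a).im ∂μ) ^ 2)
      ≤ (∫⁻ a, ENNReal.ofReal (‖f a‖ ^ 2) ∂μ) * ∫⁻ a, ENNReal.ofReal (‖g a‖ ^ 2) ∂μ := by
  have enorm_im_le (a : α) : ‖(starRingEnd ℂ (f a) * g a).im‖ₑ ≤ ‖f a‖ₑ * ‖g a‖ₑ := by
    rw [← RCLike.enorm_conj (f a), ← enorm_mul]
    simpa only [enorm_le_iff_norm_le, Real.norm_eq_abs] using Complex.abs_im_le_norm _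
  simp only [ENNReal.ofReal_norm_sq]
  calc ENNReal.ofReal ((∫ a, (starRingEnd ℂ (f a) * g a).im ∂μ) ^ 2)
      = ‖∫ a, (starRingEnd ℂ (f a) * g a).im ∂μ‖ₑ ^ 2 := by
        rw [← ENNReal.ofReal_norm_sq, Real.norm_eq_abs, sq_abs]
    _ ≤ (∫⁻ a, ‖f a‖ₑ * ‖g a‖ₑ ∂μ) ^ 2 := by
        gcongr
        exact (enorm_integral_le_lintegral_enorm _).trans (lintegral_mono enorm_im_le)
    _ ≤ _ := ENNReal.lintegral_mul_sq_le hf.enorm hg.enorm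

lemma ofReal_sq_integral_im_conj_mul_div_le {f g : α → ℂ} (hf : AEMeasurable f μ)
    (hg : AEMeasurable g μ) :
    ENNReal.ofReal ((∫ a, (starRingEnd ℂ (f a) * g a).im ∂μ) ^ 2 / ∫ a, ‖f a‖ ^ 2 ∂μ)
      ≤ ∫⁻ a, ENNReal.ofReal (‖g a‖ ^ 2) ∂μ := by
  set A := ∫ a, ‖f a‖ ^ 2 ∂μ
  have hA_nonneg : 0 ≤ A := integral_nonneg fun a => sq_nonneg ‖f a‖
  rcases hA_nonneg.eq_or_lt with hA | hA
  · rw [← hA, div_zero, ENNReal.ofReal_zero]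
    exact zero_le
  have hA_lintegral : ∫⁻ a, ENNReal.ofReal (‖f a‖ ^ 2) ∂μ = ENNReal.ofReal A :=
    (ofReal_integral_eq_lintegral_ofReal (Integrable.of_integral_ne_zero hA.ne')
      (.of_forall fun a => sq_nonneg ‖f a‖)).symm
  rw [ENNReal.ofReal_div_of_pos hA]
  refine ENNReal.div_le_of_le_mul ?_
  rw [mul_comm, ← hA_lintegral]
  exact ofReal_sq_integral_im_conj_mul_le hf hg

end CauchySchwarz

lemma sum_sq_mul_div_mul {ι : Type*} (s : Finset ι) (c b : ℝ) (a : ι → ℝ) :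
    (∑ i ∈ s, (c * a i) ^ 2) / (c * b) = c * ∑ i ∈ s, a i ^ 2 / b := by
  rcases eq_or_ne c 0 with rfl | hc
  · simp
  simp only [mul_pow, ← Finset.mul_sum, ← Finset.sum_div]
  rw [mul_div_mul_comm, sq, mul_div_cancel_right₀ _ hc]

lemma ofReal_sum_sq_integral_im_conj_mul_div_le {α ι : Type*} [MeasurableSpace α] [Fintype ι]
    {μ : Measure α} (N : ℕ) {f : α → ℂ} {g : ι → α → ℂ} (hf : AEMeasurable f μ)
    (hg : ∀ i, AEMeasurable (g i) μ) :
    ENNReal.ofReal ((∑ i, ((N : ℝ) * ∫ a, (starRingEnd ℂ (f a) * g i a).im ∂μ) ^ 2)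
        / ((N : ℝ) * ∫ a, ‖f a‖ ^ 2 ∂μ))
      ≤ N * ∑ i, ∫⁻ a, ENNReal.ofReal (‖g i a‖ ^ 2) ∂μ := by
  rw [sum_sq_mul_div_mul, ENNReal.ofReal_mul (Nat.cast_nonneg N), ENNReal.ofReal_natCast,
    ENNReal.ofReal_sum_of_nonneg fun i _ => by positivity]
  gcongr with i
  exact ofReal_sq_integral_im_conj_mul_div_le hf (hg i)

lemma lintegral_ofReal_sum_norm_sq_prod {α β ι : Type*} [MeasurableSpace α] [MeasurableSpace β]
    [Fintype ι] (μ : Measure α) (ν : Measure β) [SFinite ν] {g : ι → α × β → ℂ}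
    (hg : ∀ i, Measurable (g i)) :
    ∫⁻ z, ENNReal.ofReal (∑ i, ‖g i z‖ ^ 2) ∂μ.prod ν
      = ∫⁻ x, ∑ i, ∫⁻ y, ENNReal.ofReal (‖g i (x, y)‖ ^ 2) ∂ν ∂μ := by
  have hg_sq (i : ι) : Measurable fun z => ENNReal.ofReal (‖g i z‖ ^ 2) :=
    ((hg i).norm.pow_const 2).ennreal_ofReal
  simp_rw [ENNReal.ofReal_sum_of_nonneg fun i _ => sq_nonneg ‖g i _‖]
  rw [lintegral_prod _ (Finset.measurable_sum _ fun i _ => hg_sq i).aemeasurable]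
  refine lintegral_congr fun x => lintegral_finsetSum _ fun i _ => ?_
  exact (hg_sq i).comp measurable_prodMk_left

theorem stmt4_general (N : ℕ)
    (ψ : EuclideanSpace ℝ (Fin 3) × EuclideanSpace ℝ (Fin (3 * (N - 1))) → ℂ)
    (Dψ : Fin 3 → EuclideanSpace ℝ (Fin 3) × EuclideanSpace ℝ (Fin (3 * (N - 1))) → ℂ)
    (hψm : Measurable ψ) (hDm : ∀ i, Measurable (Dψ i)) :
    ∫⁻ x : EuclideanSpace ℝ (Fin 3),
        ENNReal.ofReal
          ((∑ i : Fin 3,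
              ((N : ℝ) * ∫ y, ((starRingEnd ℂ) (ψ (x, y)) * Dψ i (x, y)).im) ^ 2)
            / ((N : ℝ) * ∫ y, ‖ψ (x, y)‖ ^ 2))
      ≤ (N : ℝ≥0∞) * ∫⁻ z, ENNReal.ofReal (∑ i : Fin 3, ‖Dψ i z‖ ^ 2) := by
  rw [Measure.volume_eq_prod, lintegral_ofReal_sum_norm_sq_prod _ _ hDm,
    ← lintegral_const_mul' _ _ (ENNReal.natCast_ne_top N)]
  refine lintegral_mono fun x => ?_
  exact ofReal_sum_sq_integral_im_conj_mul_div_le N (hψm.comp measurable_prodMk_left).aemeasurable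
    fun i => ((hDm i).comp measurable_prodMk_left).aemeasurable

/-- For a normalized wavefunction `ψ ∈ H¹(ℝ^{3N})` (with first-variable gradient components
`Dψ i ∈ L²`), the densities `ρ_ψ(x) = N ∫ |ψ(x,y)|² dy` and
`jᵖ_ψ(x)ᵢ = N ∫ Im(conj ψ ∂ᵢψ) dy` satisfy `∫ |jᵖ_ψ|² ρ_ψ⁻¹ ≤ N ∫ |∇₁ψ|²`,
the integrand being `0` where `ρ_ψ = 0` (real division by zero is zero). -/
theorem stmt4 (N : ℕ) (hN : 1 ≤ N)
    (ψ : EuclideanSpace ℝ (Fin 3) × EuclideanSpace ℝ (Fin (3 * (N - 1))) → ℂ)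
    (Dψ : Fin 3 → EuclideanSpace ℝ (Fin 3) × EuclideanSpace ℝ (Fin (3 * (N - 1))) → ℂ)
    (hψm : Measurable ψ) (hDm : ∀ i, Measurable (Dψ i))
    (hψ : MemLp ψ 2 volume) (hD : ∀ i, MemLp (Dψ i) 2 volume)
    (hnorm : eLpNorm ψ 2 volume = 1) :
    ∫⁻ x : EuclideanSpace ℝ (Fin 3),
        ENNReal.ofReal
          ((∑ i : Fin 3,
              ((N : ℝ) * ∫ y, ((starRingEnd ℂ) (ψ (x, y)) * Dψ i (x, y)).im) ^ 2)
            / ((N : ℝ) * ∫ y, ‖ψ (x, y)‖ ^ 2))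
      ≤ (N : ℝ≥0∞) * ∫⁻ z, ENNReal.ofReal (∑ i : Fin 3, ‖Dψ i z‖ ^ 2) :=
  stmt4_general N ψ Dψ hψm hDm
end

section
/- If ψₖ ⇀ ψ weakly in H¹(ℝ^{3N}) and ψₖ → ψ in L²(ℝ^{3N})-norm, then for every bounded measurable set M ⊂ ℝ³ and each l = 1,2,3, ∫_{ℝ³} (jᵖ_{ψₖ})_l χ_M → ∫_{ℝ³} (jᵖ_ψ)_l χ_M, where jᵖ_φ(x) = N Im ∫ conj(φ) ∇ₓφ dx₂…dx_N. Consequently if jᵖ_{ψₖ} = jᵖ for all k then jᵖ_ψ = jᵖ a.e. -/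
/-!
Integrating the current over `M` gives `N Im ∫ conj(1_{M × ℝ^{3(N-1)}} ψₖ) ∂ₗψₖ`, the `L²`
pairing of a strongly convergent sequence with a weakly convergent one. Weakly convergent
sequences are bounded by Banach–Steinhaus, so such pairings converge. If every `jᵖ_{ψₖ}`
equals `jᵖ`, the integrals of `jᵖ_ψ` and of `jᵖ` then agree on every compact set, hence
`jᵖ_ψ = jᵖ` a.e.
-/

open MeasureTheory Filter
open scoped Topology

/-- The `l`-th component of the paramagnetic current density of a wavefunction `φ` on
`ℝ^{3N} = ℝ³ × ℝ^{3(N-1)}`, whose `l`-th first-variable partial derivative is `dφ`. -/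
noncomputable def jComp (N m : ℕ)
    (φ dφ : EuclideanSpace ℝ (Fin 3) × EuclideanSpace ℝ (Fin m) → ℂ)
    (x : EuclideanSpace ℝ (Fin 3)) : ℝ :=
  (N : ℝ) * ∫ y, ((starRingEnd ℂ) (φ (x, y)) * dφ (x, y)).im

open scoped ComplexConjugate

section WeakStrong

variable {α 𝕜 : Type*} [RCLike 𝕜] {mα : MeasurableSpace α} {μ : Measure α}

lemma MeasureTheory.MemLp.integrable_conj_mul {f g : α → 𝕜} (hf : MemLp f 2 μ)
    (hg : MemLp g 2 μ) :
    Integrable (fun z => conj (f z) * g z) μ :=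
  hf.star.integrable_mul hg

lemma integral_conj_mul_eq_inner {f g : α → 𝕜} (hf : MemLp f 2 μ) (hg : MemLp g 2 μ) :
    ∫ z, conj (f z) * g z ∂μ = inner 𝕜 (hf.toLp f) (hg.toLp g) := by
  rw [L2.inner_def]
  refine integral_congr_ae ?_
  filter_upwards [hf.coeFn_toLp, hg.coeFn_toLp] with z hfz hgz
  rw [hfz, hgz, RCLike.inner_apply, mul_comm]

lemma norm_integral_conj_mul_le {f g : α → 𝕜} (hf : MemLp f 2 μ) (hg : MemLp g 2 μ) :
    ‖∫ z, conj (f z) * g z ∂μ‖ ≤ (eLpNorm f 2 μ).toReal * (eLpNorm g 2 μ).toReal := by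
  rw [integral_conj_mul_eq_inner hf hg, ← Lp.norm_toLp f hf, ← Lp.norm_toLp g hg]
  exact norm_inner_le_norm _ _

lemma integral_conj_indicator_mul {s : Set α} (hs : MeasurableSet s) (f g : α → 𝕜) :
    ∫ z, conj (s.indicator f z) * g z ∂μ = ∫ z in s, conj (f z) * g z ∂μ := by
  rw [← integral_indicator hs]
  congr 1
  funext z
  by_cases hz : z ∈ s <;> simp [hz]

lemma exists_eLpNorm_le_of_weak_tendsto {g : ℕ → α → 𝕜} {g₀ : α → 𝕜}
    (hg : ∀ k, MemLp (g k) 2 μ)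
    (hweak : ∀ h, MemLp h 2 μ → Tendsto (fun k => ∫ z, conj (g k z) * h z ∂μ) atTop
      (𝓝 (∫ z, conj (g₀ z) * h z ∂μ))) :
    ∃ C, ∀ k, (eLpNorm (g k) 2 μ).toReal ≤ C := by
  let T : ℕ → Lp 𝕜 2 μ →L[𝕜] 𝕜 := fun k => innerSL 𝕜 ((hg k).toLp (g k))
  have hpointwise : ∀ h, ∃ C, ∀ k, ‖T k h‖ ≤ C := by
    intro h
    obtain ⟨C, hC⟩ := (hweak h (Lp.memLp h)).norm.bddAbove_range
    refine ⟨C, fun k => ?_⟩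
    have hTk : T k h = ∫ z, conj (g k z) * h z ∂μ := by
      rw [integral_conj_mul_eq_inner (hg k) (Lp.memLp h), Lp.toLp_coeFn]
      rfl
    rw [hTk]
    exact hC ⟨k, rfl⟩
  obtain ⟨C, hC⟩ := banach_steinhaus hpointwise
  refine ⟨C, fun k => ?_⟩
  rw [← Lp.norm_toLp (g k) (hg k), ← innerSL_apply_norm 𝕜]
  exact hC k

lemma tendsto_integral_conj_mul_of_strong_of_weak {f g : ℕ → α → 𝕜} {f₀ g₀ : α → 𝕜}
    (hf : ∀ k, MemLp (f k) 2 μ) (hf₀ : MemLp f₀ 2 μ) (hg : ∀ k, MemLp (g k) 2 μ)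
    (hstrong : Tendsto (fun k => eLpNorm (f k - f₀) 2 μ) atTop (𝓝 0))
    (hweak : ∀ h, MemLp h 2 μ → Tendsto (fun k => ∫ z, conj (g k z) * h z ∂μ) atTop
      (𝓝 (∫ z, conj (g₀ z) * h z ∂μ))) :
    Tendsto (fun k => ∫ z, conj (f k z) * g k z ∂μ) atTop
      (𝓝 (∫ z, conj (f₀ z) * g₀ z ∂μ)) := by
  obtain ⟨C, hC⟩ := exists_eLpNorm_le_of_weak_tendsto hg hweak
  have hsplit : ∀ k, ∫ z, conj (f k z) * g k z ∂μ
      = ∫ z, conj ((f k - f₀) z) * g k z ∂μ + ∫ z, conj (f₀ z) * g k z ∂μ := by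
    intro k
    rw [← integral_add (((hf k).sub hf₀).integrable_conj_mul (hg k))
      (hf₀.integrable_conj_mul (hg k))]
    congr 1
    funext z
    simp only [Pi.sub_apply, map_sub]
    ring
  have hdiff : Tendsto (fun k => ∫ z, conj ((f k - f₀) z) * g k z ∂μ) atTop (𝓝 0) := by
    have hstrong' : Tendsto (fun k => (eLpNorm (f k - f₀) 2 μ).toReal) atTop (𝓝 0) :=
      (ENNReal.tendsto_toReal ENNReal.zero_ne_top).comp hstrong
    refine squeeze_zero_norm (fun k => ?_) (by simpa using hstrong'.mul_const C)
    exact (norm_integral_conj_mul_le ((hf k).sub hf₀) (hg k)).trans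
      (mul_le_mul_of_nonneg_left (hC k) ENNReal.toReal_nonneg)
  have hmain : Tendsto (fun k => ∫ z, conj (f₀ z) * g k z ∂μ) atTop
      (𝓝 (∫ z, conj (f₀ z) * g₀ z ∂μ)) := by
    have hconj : ∀ g' : α → 𝕜,
        conj (∫ z, conj (g' z) * f₀ z ∂μ) = ∫ z, conj (f₀ z) * g' z ∂μ := by
      intro g'
      rw [← integral_conj]
      congr 1
      funext z
      simp [mul_comm]
    simpa only [Function.comp_def, hconj] using
      (RCLike.continuous_conj.tendsto _).comp (hweak f₀ hf₀)
  simpa only [hsplit, zero_add] using hdiff.add hmain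

lemma tendsto_setIntegral_conj_mul_of_strong_of_weak {f g : ℕ → α → 𝕜} {f₀ g₀ : α → 𝕜}
    (hf : ∀ k, MemLp (f k) 2 μ) (hf₀ : MemLp f₀ 2 μ) (hg : ∀ k, MemLp (g k) 2 μ)
    (hstrong : Tendsto (fun k => eLpNorm (f k - f₀) 2 μ) atTop (𝓝 0))
    (hweak : ∀ h, MemLp h 2 μ → Tendsto (fun k => ∫ z, conj (g k z) * h z ∂μ) atTop
      (𝓝 (∫ z, conj (g₀ z) * h z ∂μ)))
    {s : Set α} (hs : MeasurableSet s) :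
    Tendsto (fun k => ∫ z in s, conj (f k z) * g k z ∂μ) atTop
      (𝓝 (∫ z in s, conj (f₀ z) * g₀ z ∂μ)) := by
  have hstrong_s : Tendsto (fun k => eLpNorm (s.indicator (f k) - s.indicator f₀) 2 μ)
      atTop (𝓝 0) := by
    refine tendsto_of_tendsto_of_tendsto_of_le_of_le tendsto_const_nhds hstrong
      (fun _ => bot_le) (fun k => ?_)
    rw [← Set.indicator_sub']
    exact eLpNorm_indicator_le _
  have hind : ∀ k, MemLp (s.indicator (f k)) 2 μ := fun k => (hf k).indicator hs
  have key := tendsto_integral_conj_mul_of_strong_of_weak hind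
    (hf₀.indicator hs) hg hstrong_s hweak
  simp only [integral_conj_indicator_mul hs] at key
  exact key

end WeakStrong

lemma ae_eq_of_tendsto_setIntegral_isCompact {β E ι : Type*} [TopologicalSpace β]
    [MeasurableSpace β] [BorelSpace β] [SigmaCompactSpace β] [R1Space β]
    [NormedAddCommGroup E] [NormedSpace ℝ E] [CompleteSpace E] {μ : Measure β}
    {l : Filter ι} [l.NeBot] {f : ι → β → E} {f₀ g : β → E}
    (hf₀ : Integrable f₀ μ) (hg : Integrable g μ) (hfg : ∀ k, f k =ᵐ[μ] g)
    (hlim : ∀ K, IsCompact K →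
      Tendsto (fun k => ∫ x in K, f k x ∂μ) l (𝓝 (∫ x in K, f₀ x ∂μ))) :
    f₀ =ᵐ[μ] g := by
  have hsub : f₀ - g =ᵐ[μ] 0 := by
    refine ae_eq_zero_of_forall_setIntegral_isCompact_eq_zero (hf₀.sub hg) fun K hK => ?_
    have hK : ∫ x in K, f₀ x ∂μ = ∫ x in K, g x ∂μ :=
      tendsto_nhds_unique (hlim K hK) (tendsto_const_nhds.congr fun k =>
        (integral_congr_ae (ae_restrict_of_ae (hfg k))).symm)
    rw [Pi.sub_def, integral_sub hf₀.integrableOn hg.integrableOn, hK, sub_self]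
  filter_upwards [hsub] with x hx
  exact sub_eq_zero.1 hx


section Current

variable (N m : ℕ)

lemma integrable_jComp {φ dφ : EuclideanSpace ℝ (Fin 3) × EuclideanSpace ℝ (Fin m) → ℂ}
    (hφ : MemLp φ 2 volume) (hdφ : MemLp dφ 2 volume) :
    Integrable (jComp N m φ dφ) volume := by
  have hI := hφ.integrable_conj_mul hdφ
  rw [Measure.volume_eq_prod] at hI
  exact hI.im.integral_prod_left.const_mul _

lemma setIntegral_jComp {φ dφ : EuclideanSpace ℝ (Fin 3) × EuclideanSpace ℝ (Fin m) → ℂ}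
    (hφ : MemLp φ 2 volume) (hdφ : MemLp dφ 2 volume) (M : Set (EuclideanSpace ℝ (Fin 3))) :
    ∫ x in M, jComp N m φ dφ x = N * (∫ z in M ×ˢ Set.univ, conj (φ z) * dφ z).im := by
  have hI := (hφ.integrable_conj_mul hdφ).integrableOn (s := M ×ˢ Set.univ)
  rw [Measure.volume_eq_prod] at hI ⊢
  simp only [jComp]
  rw [integral_const_mul, ← RCLike.im_to_complex, ← integral_im hI,
    setIntegral_prod _ hI.im, Measure.restrict_univ]
  rfl

lemma tendsto_setIntegral_jComp
    {φ dφ : ℕ → EuclideanSpace ℝ (Fin 3) × EuclideanSpace ℝ (Fin m) → ℂ}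
    {φ₀ dφ₀ : EuclideanSpace ℝ (Fin 3) × EuclideanSpace ℝ (Fin m) → ℂ}
    (hφ : ∀ k, MemLp (φ k) 2 volume) (hφ₀ : MemLp φ₀ 2 volume)
    (hdφ : ∀ k, MemLp (dφ k) 2 volume) (hdφ₀ : MemLp dφ₀ 2 volume)
    (hstrong : Tendsto (fun k => eLpNorm (φ k - φ₀) 2 volume) atTop (𝓝 0))
    (hweak : ∀ h, MemLp h 2 volume →
      Tendsto (fun k => ∫ z, conj (dφ k z) * h z) atTop (𝓝 (∫ z, conj (dφ₀ z) * h z)))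
    {M : Set (EuclideanSpace ℝ (Fin 3))} (hM : MeasurableSet M) :
    Tendsto (fun k => ∫ x in M, jComp N m (φ k) (dφ k) x) atTop
      (𝓝 (∫ x in M, jComp N m φ₀ dφ₀ x)) := by
  simp only [setIntegral_jComp N m (hφ _) (hdφ _), setIntegral_jComp N m hφ₀ hdφ₀]
  exact ((Complex.continuous_im.tendsto _).comp
    (tendsto_setIntegral_conj_mul_of_strong_of_weak hφ hφ₀ hdφ hstrong hweak
      (hM.prod MeasurableSet.univ))).const_mul _

end Current

theorem stmt6_general (N m : ℕ)
    (ψk : ℕ → EuclideanSpace ℝ (Fin 3) × EuclideanSpace ℝ (Fin m) → ℂ)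
    (ψ : EuclideanSpace ℝ (Fin 3) × EuclideanSpace ℝ (Fin m) → ℂ)
    (Dψk : ℕ → Fin 3 → EuclideanSpace ℝ (Fin 3) × EuclideanSpace ℝ (Fin m) → ℂ)
    (Dψ : Fin 3 → EuclideanSpace ℝ (Fin 3) × EuclideanSpace ℝ (Fin m) → ℂ)
    (hψkL2 : ∀ k, MemLp (ψk k) 2 volume) (hψL2 : MemLp ψ 2 volume)
    (hDkL2 : ∀ k l, MemLp (Dψk k l) 2 volume) (hDL2 : ∀ l, MemLp (Dψ l) 2 volume)
    (hstrong : Tendsto (fun k => eLpNorm (ψk k - ψ) 2 volume) atTop (𝓝 0))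
    (hweakD : ∀ l, ∀ h, MemLp h 2 volume →
      Tendsto (fun k => ∫ z, (starRingEnd ℂ) (Dψk k l z) * h z) atTop
        (𝓝 (∫ z, (starRingEnd ℂ) (Dψ l z) * h z))) :
    (∀ M : Set (EuclideanSpace ℝ (Fin 3)), MeasurableSet M → Bornology.IsBounded M →
        ∀ l : Fin 3,
          Tendsto (fun k => ∫ x in M, jComp N m (ψk k) (Dψk k l) x) atTop
            (𝓝 (∫ x in M, jComp N m ψ (Dψ l) x))) ∧
      ∀ jp : Fin 3 → EuclideanSpace ℝ (Fin 3) → ℝ,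
        (∀ k l, ∀ᵐ x ∂(volume : Measure (EuclideanSpace ℝ (Fin 3))),
            jComp N m (ψk k) (Dψk k l) x = jp l x) →
          ∀ l, ∀ᵐ x ∂(volume : Measure (EuclideanSpace ℝ (Fin 3))),
            jComp N m ψ (Dψ l) x = jp l x := by
  have hlim : ∀ l M, MeasurableSet M →
      Tendsto (fun k => ∫ x in M, jComp N m (ψk k) (Dψk k l) x) atTop
        (𝓝 (∫ x in M, jComp N m ψ (Dψ l) x)) := fun l _ hM =>
    tendsto_setIntegral_jComp N m hψkL2 hψL2 (hDkL2 · l) (hDL2 l) hstrong (hweakD l) hM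
  refine ⟨fun M hM _ l => hlim l M hM, fun jp hjp l => ?_⟩
  exact ae_eq_of_tendsto_setIntegral_isCompact (integrable_jComp N m hψL2 (hDL2 l))
    ((integrable_jComp N m (hψkL2 0) (hDkL2 0 l)).congr (hjp 0 l)) (hjp · l)
    fun K hK => hlim l K hK.measurableSet

/-- If `ψₖ ⇀ ψ` weakly in `H¹(ℝ^{3N})` (weak `L²`-convergence of `ψₖ` and of the first-variable
partial derivatives `Dψₖ l`) and `ψₖ → ψ` in `L²`-norm, then for every bounded measurable
`M ⊂ ℝ³` and each component `l`, `∫_M (jᵖ_{ψₖ})_l → ∫_M (jᵖ_ψ)_l`.  Consequently, if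
`jᵖ_{ψₖ} = jᵖ` (a.e.) for all `k`, then `jᵖ_ψ = jᵖ` a.e. -/
theorem stmt6 (N m : ℕ) (hN : 1 ≤ N)
    (ψk : ℕ → EuclideanSpace ℝ (Fin 3) × EuclideanSpace ℝ (Fin m) → ℂ)
    (ψ : EuclideanSpace ℝ (Fin 3) × EuclideanSpace ℝ (Fin m) → ℂ)
    (Dψk : ℕ → Fin 3 → EuclideanSpace ℝ (Fin 3) × EuclideanSpace ℝ (Fin m) → ℂ)
    (Dψ : Fin 3 → EuclideanSpace ℝ (Fin 3) × EuclideanSpace ℝ (Fin m) → ℂ)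
    (hψkm : ∀ k, Measurable (ψk k)) (hψm : Measurable ψ)
    (hDkm : ∀ k l, Measurable (Dψk k l)) (hDm : ∀ l, Measurable (Dψ l))
    (hψkL2 : ∀ k, MemLp (ψk k) 2 volume) (hψL2 : MemLp ψ 2 volume)
    (hDkL2 : ∀ k l, MemLp (Dψk k l) 2 volume) (hDL2 : ∀ l, MemLp (Dψ l) 2 volume)
    (hnorm : ∀ k, eLpNorm (ψk k) 2 volume = 1)
    (hstrong : Tendsto (fun k => eLpNorm (ψk k - ψ) 2 volume) atTop (𝓝 0))
    (hweakψ : ∀ h, MemLp h 2 volume →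
      Tendsto (fun k => ∫ z, (starRingEnd ℂ) (ψk k z) * h z) atTop
        (𝓝 (∫ z, (starRingEnd ℂ) (ψ z) * h z)))
    (hweakD : ∀ l, ∀ h, MemLp h 2 volume →
      Tendsto (fun k => ∫ z, (starRingEnd ℂ) (Dψk k l z) * h z) atTop
        (𝓝 (∫ z, (starRingEnd ℂ) (Dψ l z) * h z))) :
    (∀ M : Set (EuclideanSpace ℝ (Fin 3)), MeasurableSet M → Bornology.IsBounded M →
        ∀ l : Fin 3,
          Tendsto (fun k => ∫ x in M, jComp N m (ψk k) (Dψk k l) x) atTop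
            (𝓝 (∫ x in M, jComp N m ψ (Dψ l) x))) ∧
      ∀ jp : Fin 3 → EuclideanSpace ℝ (Fin 3) → ℝ,
        (∀ k l, ∀ᵐ x ∂(volume : Measure (EuclideanSpace ℝ (Fin 3))),
            jComp N m (ψk k) (Dψk k l) x = jp l x) →
          ∀ l, ∀ᵐ x ∂(volume : Measure (EuclideanSpace ℝ (Fin 3))),
            jComp N m ψ (Dψ l) x = jp l x :=
  stmt6_general N m ψk ψ Dψk Dψ hψkL2 hψL2 hDkL2 hDL2 hstrong hweakD
end

section
/- Let ρₙ → ρ in L¹(ℝ³) with ρₙ, ρ ≥ 0, jₙ → j in (L¹(ℝ³))³, and suppose liminfₙ ∫ |jₙ|² ρₙ⁻¹ < ∞. Then ∫ |j|² ρ⁻¹ ≤ liminfₙ ∫ |jₙ|² ρₙ⁻¹. -/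
/-!
Pass to a subsequence along which `∫ |jₙ|² ρₙ⁻¹` tends to its liminf, and from it, since `L¹`
convergence implies convergence in measure, to a further subsequence along which `ρₙ → ρ` and
`jₙ → j` almost everywhere. The integrand `(a, b) ↦ a² / b` (in `ℝ≥0∞`, with `b` replaced by
`max b 0`) is lower semicontinuous, so Fatou's lemma along that subsequence gives the claim.
-/

open MeasureTheory Filter
open scoped ENNReal Topology

theorem ENNReal.ofReal_sq_div_ofReal_le_liminf {ι : Type*} {l : Filter ι} [l.NeBot]
    {a b : ℝ} {an bn : ι → ℝ} (ha : Tendsto an l (𝓝 a)) (hb : Tendsto bn l (𝓝 b)) :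
    ENNReal.ofReal (a ^ 2) / ENNReal.ofReal b
      ≤ liminf (fun k => ENNReal.ofReal (an k ^ 2) / ENNReal.ofReal (bn k)) l := by
  by_cases ha0 : ENNReal.ofReal (a ^ 2) = 0
  · simp [ha0]
  have hA : Tendsto (fun k => ENNReal.ofReal (an k ^ 2)) l (𝓝 (ENNReal.ofReal (a ^ 2))) :=
    ENNReal.tendsto_ofReal (ha.pow 2)
  have hB : Tendsto (fun k => (ENNReal.ofReal (bn k))⁻¹) l (𝓝 (ENNReal.ofReal b)⁻¹) :=
    (ENNReal.tendsto_ofReal hb).inv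
  -- the quotient can only jump at `0 / 0`, and the numerator limit is nonzero
  have hdiv := ENNReal.Tendsto.mul hA (Or.inl ha0) hB (Or.inr ENNReal.ofReal_ne_top)
  simp only [← div_eq_mul_inv] at hdiv
  exact hdiv.liminf_eq.ge

namespace MeasureTheory

variable {α : Type*} [MeasurableSpace α] {μ : Measure α}

theorem lintegral_le_liminf_of_forall_subseq_ae_le_liminf {f : α → ℝ≥0∞} {F : ℕ → α → ℝ≥0∞}
    (hF : ∀ n, AEMeasurable (F n) μ)
    (h : ∀ φ : ℕ → ℕ, Tendsto φ atTop atTop → ∃ ψ : ℕ → ℕ, Tendsto ψ atTop atTop ∧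
      ∀ᵐ x ∂μ, f x ≤ liminf (fun k => F (φ (ψ k)) x) atTop) :
    ∫⁻ x, f x ∂μ ≤ liminf (fun n => ∫⁻ x, F n x ∂μ) atTop := by
  obtain ⟨φ, hφ_lim, hφ⟩ := exists_seq_tendsto_liminf (u := fun n => ∫⁻ x, F n x ∂μ) (f := atTop)
  obtain ⟨ψ, hψ, hfF⟩ := h φ hφ
  calc ∫⁻ x, f x ∂μ ≤ ∫⁻ x, liminf (fun k => F (φ (ψ k)) x) atTop ∂μ := lintegral_mono_ae hfF
    _ ≤ liminf (fun k => ∫⁻ x, F (φ (ψ k)) x ∂μ) atTop :=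
      lintegral_liminf_le' fun k => hF (φ (ψ k))
    _ = liminf (fun n => ∫⁻ x, F n x ∂μ) atTop := (hφ_lim.comp hψ).liminf_eq

theorem exists_subseq_tendsto_ae_of_tendsto_eLpNorm {E : Type*} [NormedAddCommGroup E]
    {p : ℝ≥0∞} (hp : p ≠ 0) {f : ℕ → α → E} {g : α → E}
    (hf : ∀ n, AEStronglyMeasurable (f n) μ) (hg : AEStronglyMeasurable g μ)
    (hfg : Tendsto (fun n => eLpNorm (f n - g) p μ) atTop (𝓝 0))
    {φ : ℕ → ℕ} (hφ : Tendsto φ atTop atTop) :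
    ∃ ψ : ℕ → ℕ, Tendsto ψ atTop atTop ∧
      ∀ᵐ x ∂μ, Tendsto (fun k => f (φ (ψ k)) x) atTop (𝓝 (g x)) := by
  obtain ⟨ψ, hψ, hae⟩ :=
    ((tendstoInMeasure_of_tendsto_eLpNorm hp hf hg hfg).comp hφ).exists_seq_tendsto_ae
  exact ⟨ψ, hψ.tendsto_atTop, hae⟩

end MeasureTheory

theorem stmt9_general (ρn : ℕ → EuclideanSpace ℝ (Fin 3) → ℝ) (ρ : EuclideanSpace ℝ (Fin 3) → ℝ)
    (jn : ℕ → EuclideanSpace ℝ (Fin 3) → EuclideanSpace ℝ (Fin 3))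
    (j : EuclideanSpace ℝ (Fin 3) → EuclideanSpace ℝ (Fin 3))
    (hρnm : ∀ n, Measurable (ρn n)) (hρm : Measurable ρ)
    (hjnm : ∀ n, Measurable (jn n)) (hjm : Measurable j)
    (hρconv : Tendsto (fun n => eLpNorm (ρn n - ρ) 1 volume) atTop (𝓝 0))
    (hjconv : Tendsto (fun n => eLpNorm (jn n - j) 1 volume) atTop (𝓝 0)) :
    ∫⁻ x, ENNReal.ofReal (‖j x‖ ^ 2) / ENNReal.ofReal (ρ x)
      ≤ liminf (fun n => ∫⁻ x, ENNReal.ofReal (‖jn n x‖ ^ 2) / ENNReal.ofReal (ρn n x))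
          atTop := by
  refine lintegral_le_liminf_of_forall_subseq_ae_le_liminf
    (fun n => (((hjnm n).norm.pow_const 2).ennreal_ofReal.div
      (hρnm n).ennreal_ofReal).aemeasurable) fun φ hφ => ?_
  obtain ⟨ψ₁, hψ₁, hρ_ae⟩ := exists_subseq_tendsto_ae_of_tendsto_eLpNorm one_ne_zero
    (fun n => (hρnm n).aestronglyMeasurable) hρm.aestronglyMeasurable hρconv hφ
  obtain ⟨ψ₂, hψ₂, hj_ae⟩ := exists_subseq_tendsto_ae_of_tendsto_eLpNorm one_ne_zero
    (fun n => (hjnm n).aestronglyMeasurable) hjm.aestronglyMeasurable hjconv (hφ.comp hψ₁)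
  refine ⟨ψ₁ ∘ ψ₂, hψ₁.comp hψ₂, ?_⟩
  filter_upwards [hρ_ae, hj_ae] with x hρx hjx
  exact ENNReal.ofReal_sq_div_ofReal_le_liminf hjx.norm (hρx.comp hψ₂)

/-- Lower semicontinuity of `J₀(ρ, j) = ∫ |j|² ρ⁻¹` along `L¹`-convergent sequences:
if `ρₙ → ρ` in `L¹` (`ρₙ, ρ ≥ 0`), `jₙ → j` in `(L¹)³`, and
`liminf ∫ |jₙ|² ρₙ⁻¹ < ∞`, then `∫ |j|² ρ⁻¹ ≤ liminf ∫ |jₙ|² ρₙ⁻¹`. -/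
theorem stmt9 (ρn : ℕ → EuclideanSpace ℝ (Fin 3) → ℝ) (ρ : EuclideanSpace ℝ (Fin 3) → ℝ)
    (jn : ℕ → EuclideanSpace ℝ (Fin 3) → EuclideanSpace ℝ (Fin 3))
    (j : EuclideanSpace ℝ (Fin 3) → EuclideanSpace ℝ (Fin 3))
    (hρnm : ∀ n, Measurable (ρn n)) (hρm : Measurable ρ)
    (hjnm : ∀ n, Measurable (jn n)) (hjm : Measurable j)
    (hρni : ∀ n, Integrable (ρn n) volume) (hρi : Integrable ρ volume)
    (hjni : ∀ n, Integrable (jn n) volume) (hji : Integrable j volume)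
    (hρnn : ∀ n, ∀ᵐ x ∂(volume : Measure (EuclideanSpace ℝ (Fin 3))), 0 ≤ ρn n x)
    (hρpos : ∀ᵐ x ∂(volume : Measure (EuclideanSpace ℝ (Fin 3))), 0 ≤ ρ x)
    (hρconv : Tendsto (fun n => eLpNorm (ρn n - ρ) 1 volume) atTop (𝓝 0))
    (hjconv : Tendsto (fun n => eLpNorm (jn n - j) 1 volume) atTop (𝓝 0))
    (hfin :
      liminf (fun n => ∫⁻ x, ENNReal.ofReal (‖jn n x‖ ^ 2) / ENNReal.ofReal (ρn n x)) atTop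
        < ⊤) :
    ∫⁻ x, ENNReal.ofReal (‖j x‖ ^ 2) / ENNReal.ofReal (ρ x)
      ≤ liminf (fun n => ∫⁻ x, ENNReal.ofReal (‖jn n x‖ ^ 2) / ENNReal.ofReal (ρn n x))
          atTop :=
  stmt9_general ρn ρ jn j hρnm hρm hjnm hjm hρconv hjconv
end

section
/- Let φ_k(x) = (ρ(x)/N)^{1/2} exp(i(k f(x₁) − M(x₁) + S(x))) for k = 0,…,N−1, where ρ ≥ 0 with ∫_{ℝ³} ρ = N, f(x₁) = (2π/N)∫_{−∞}^{x₁}∫_{ℝ²} ρ, and M, S are real-valued. Then the φ_k are orthonormal in L²(ℝ³): (φ_k, φ_l)_{L²} = δ_{kl}. -/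
/-!
The product `conj φ_k · φ_l` is `(ρ/N) e^{i(l-k) f(x₁)}`: the phases `M` and `S` cancel.
Pushing `ρ dx` forward under `x ↦ x₁` gives a finite measure on `ℝ` without atoms
(hyperplanes are Lebesgue-null), so its distribution function `F` is continuous, and the
image of such a measure under its own distribution function is Lebesgue measure on `[0, N]`.
As `f = 2πF/N`, the substitution `u = F(x₁)` turns `(φ_k, φ_l)` into
`N⁻¹ ∫₀^N e^{2πi(l-k)u/N} du = δ_{kl}`.
-/

open MeasureTheory

/-- The phase `f(x₁) = (2π/N) ∫_{y₁ ≤ x₁} ρ(y) dy` of the determinantal construction. -/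
noncomputable def detPhase (N : ℕ) (ρ : EuclideanSpace ℝ (Fin 3) → ℝ) (t : ℝ) : ℝ :=
  (2 * Real.pi / N) * ∫ x in {x : EuclideanSpace ℝ (Fin 3) | x 0 ≤ t}, ρ x

/-- The orbitals `φ_k = (ρ/N)^{1/2} e^{i(k f(x₁) − M(x₁) + S(x))}`. -/
noncomputable def detOrbital (N : ℕ) (ρ : EuclideanSpace ℝ (Fin 3) → ℝ)
    (M : ℝ → ℝ) (S : EuclideanSpace ℝ (Fin 3) → ℝ) (k : ℕ)
    (x : EuclideanSpace ℝ (Fin 3)) : ℂ :=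
  (Real.sqrt (ρ x / N) : ℂ) *
    Complex.exp (Complex.I *
      (((k : ℝ) * detPhase N ρ (x 0) - M (x 0) + S x : ℝ) : ℂ))

open Set Filter Topology

theorem Monotone.exists_preimage_Iic_eq_Iic {F : ℝ → ℝ} (hmono : Monotone F)
    (hcont : Continuous F) {a b s : ℝ} (ha : F a ≤ s) (hb : s < F b) :
    ∃ T, F T = s ∧ F ⁻¹' Iic s = Iic T := by
  have hbdd : BddAbove (F ⁻¹' Iic s) :=
    ⟨b, fun t ht => le_of_lt (hmono.reflect_lt (lt_of_le_of_lt ht hb))⟩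
  have hne : (F ⁻¹' Iic s).Nonempty := ⟨a, ha⟩
  set T := sSup (F ⁻¹' Iic s)
  have hT : F T ≤ s := (isClosed_Iic.preimage hcont).csSup_mem hne hbdd
  obtain ⟨c, hc⟩ := intermediate_value_univ a b hcont ⟨ha, hb.le⟩
  refine ⟨T, le_antisymm hT (hc ▸ hmono (le_csSup hbdd hc.le)), ?_⟩
  exact Subset.antisymm (fun t ht => le_csSup hbdd ht) (fun t ht => (hmono ht).trans hT)

section CDF
variable (μ : Measure ℝ) [IsFiniteMeasure μ]

theorem monotone_measureReal_Iic : Monotone fun t => μ.real (Iic t) :=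
  fun _ _ h => measureReal_mono (Iic_subset_Iic.2 h)

theorem tendsto_measureReal_Iic_atTop :
    Tendsto (fun t => μ.real (Iic t)) atTop (𝓝 (μ.real univ)) :=
  (ENNReal.tendsto_toReal (measure_ne_top μ univ)).comp (tendsto_measure_Iic_atTop μ)

theorem tendsto_measureReal_Iic_atBot : Tendsto (fun t => μ.real (Iic t)) atBot (𝓝 0) := by
  have h := tendsto_measure_iInter_atBot (μ := μ)
    (fun t => measurableSet_Iic.nullMeasurableSet) (monotone_Iic (α := ℝ)) ⟨0, measure_ne_top μ _⟩
  rw [iInter_Iic_eq_empty_iff.2 (by simp), measure_empty] at h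
  exact (ENNReal.tendsto_toReal ENNReal.zero_ne_top).comp h

theorem continuous_measureReal_Iic [NullSingletonClass μ] :
    Continuous fun t => μ.real (Iic t) := by
  refine continuous_iff_continuousAt.2 fun t => ?_
  simp_rw [← integral_indicator_one measurableSet_Iic]
  refine continuousAt_of_dominated (bound := fun _ => 1)
    (Eventually.of_forall fun s =>
      (measurable_const.indicator measurableSet_Iic).aestronglyMeasurable)
    (Eventually.of_forall fun s => Eventually.of_forall fun u => ?_) (integrable_const 1) ?_
  · by_cases h : u ≤ s <;> simp [h]
  · filter_upwards [measure_eq_zero_iff_ae_notMem.1 (measure_singleton (μ := μ) t)] with u hu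
    rcases lt_or_gt_of_ne hu with h | h
    · refine (continuousAt_const (y := (1 : ℝ))).congr ?_
      filter_upwards [Ioi_mem_nhds h] with s hs
      simp [(mem_Ioi.1 hs).le]
    · refine (continuousAt_const (y := (0 : ℝ))).congr ?_
      filter_upwards [Iio_mem_nhds h] with s hs
      simp [mem_Iio.1 hs]

theorem map_measureReal_Iic [NullSingletonClass μ] :
    μ.map (fun t => μ.real (Iic t)) = volume.restrict (Icc 0 (μ.real univ)) := by
  set F := fun t => μ.real (Iic t)
  have hF : Continuous F := continuous_measureReal_Iic μ
  refine Measure.ext_of_Iic _ _ fun s => ?_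
  have hIcc : Iic s ∩ Icc 0 (μ.real univ) = Icc 0 (min s (μ.real univ)) := by
    ext u; simp only [mem_inter_iff, mem_Iic, mem_Icc, le_min_iff]; tauto
  rw [Measure.map_apply hF.measurable measurableSet_Iic,
    Measure.restrict_apply measurableSet_Iic, hIcc, Real.volume_Icc, sub_zero]
  rcases lt_or_ge s (μ.real univ) with hs | hs
  · rw [min_eq_left hs.le]
    by_cases hne : (F ⁻¹' Iic s).Nonempty
    · obtain ⟨a, ha⟩ := hne
      obtain ⟨b, hb⟩ :=
        ((tendsto_measureReal_Iic_atTop μ).eventually (eventually_gt_nhds hs)).exists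
      obtain ⟨T, hT, hpre⟩ :=
        (monotone_measureReal_Iic μ).exists_preimage_Iic_eq_Iic hF ha hb
      rw [hpre, ← hT, ofReal_measureReal]
    · have hs0 : s ≤ 0 := by
        by_contra! h
        obtain ⟨t, ht⟩ :=
          ((tendsto_measureReal_Iic_atBot μ).eventually (eventually_lt_nhds h)).exists
        exact hne ⟨t, ht.le⟩
      rw [not_nonempty_iff_eq_empty.1 hne, measure_empty, ENNReal.ofReal_of_nonpos hs0]
  · have hpre : F ⁻¹' Iic s = univ :=
      eq_univ_of_forall fun t => (measureReal_mono (subset_univ _)).trans hs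
    rw [min_eq_right hs, hpre, ofReal_measureReal]
end CDF

theorem EuclideanSpace.volume_setOf_apply_eq {ι : Type*} [Fintype ι] (i : ι) (t : ℝ) :
    volume {x : EuclideanSpace ℝ ι | x i = t} = 0 :=
  ((EuclideanSpace.volume_preserving_symm_measurableEquiv_toLp ι).measure_preimage_equiv
    {y | y i = t}).trans (Measure.pi_hyperplane (fun _ : ι => (volume : Measure ℝ)) i t)

theorem integral_smul_comp_integral_setOf_le {X E : Type*} [MeasurableSpace X]
    [NormedAddCommGroup E] [NormedSpace ℝ E] {μ : Measure X} {p : X → ℝ} (hp : Measurable p)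
    (hp_null : ∀ t, μ (p ⁻¹' {t}) = 0) {ρ : X → ℝ} (hρ : Integrable ρ μ) (hρ0 : 0 ≤ᵐ[μ] ρ)
    {g : ℝ → E} (hg : AEStronglyMeasurable g (volume.restrict (Icc 0 (∫ x, ρ x ∂μ)))) :
    ∫ x, ρ x • g (∫ y in {y | p y ≤ p x}, ρ y ∂μ) ∂μ = ∫ u in Icc 0 (∫ x, ρ x ∂μ), g u := by
  set ν := μ.withDensity fun x => ENNReal.ofReal (ρ x)
  have : IsFiniteMeasure ν := isFiniteMeasure_withDensity_ofReal hρ.2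
  have : NullSingletonClass (ν.map p) := ⟨fun t => by
    rw [Measure.map_apply hp (measurableSet_singleton t)]
    exact withDensity_absolutelyContinuous _ _ (hp_null t)⟩
  have hν : ∀ s, MeasurableSet s → ν.real s = ∫ x in s, ρ x ∂μ := fun s hs => by
    rw [measureReal_def, withDensity_apply _ hs, ← ofReal_integral_eq_lintegral_ofReal
      hρ.integrableOn (ae_restrict_of_ae hρ0),
      ENNReal.toReal_ofReal (setIntegral_nonneg_of_ae_restrict (ae_restrict_of_ae hρ0))]
  have hcdf : ∀ t, (ν.map p).real (Iic t) = ∫ y in {y | p y ≤ t}, ρ y ∂μ := fun t => by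
    rw [map_measureReal_apply hp measurableSet_Iic, hν _ (hp measurableSet_Iic)]; rfl
  have hmap : (ν.map p).map (fun t => (ν.map p).real (Iic t))
      = volume.restrict (Icc 0 (∫ x, ρ x ∂μ)) := by
    rw [map_measureReal_Iic, map_measureReal_apply hp MeasurableSet.univ, preimage_univ,
      hν _ MeasurableSet.univ, Measure.restrict_univ]
  have hF := continuous_measureReal_Iic (ν.map p)
  calc ∫ x, ρ x • g (∫ y in {y | p y ≤ p x}, ρ y ∂μ) ∂μ
      = ∫ x, g ((ν.map p).real (Iic (p x))) ∂ν := by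
        rw [integral_withDensity_eq_integral_toReal_smul₀ hρ.1.aemeasurable.ennreal_ofReal
          (Eventually.of_forall fun _ => ENNReal.ofReal_lt_top)]
        refine integral_congr_ae ?_
        filter_upwards [hρ0] with x hx
        rw [ENNReal.toReal_ofReal hx, hcdf]
    _ = ∫ t, g ((ν.map p).real (Iic t)) ∂(ν.map p) :=
        (integral_map hp.aemeasurable ((hmap ▸ hg).comp_aemeasurable hF.aemeasurable)).symm
    _ = ∫ u in Icc 0 (∫ x, ρ x ∂μ), g u := by
        rw [← hmap, integral_map hF.aemeasurable (hmap ▸ hg)]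

theorem integral_Icc_exp_int_mul (L : ℝ) (hL : 0 < L) (m : ℤ) :
    ∫ u in Icc 0 L, Complex.exp (Complex.I * ((m * (2 * Real.pi / L) * u : ℝ) : ℂ))
      = if m = 0 then (L : ℂ) else 0 := by
  rw [integral_Icc_eq_integral_Ioc, ← intervalIntegral.integral_of_le hL.le]
  split_ifs with hm
  · simp [hm]
  · have hc : Complex.I * (m * (2 * Real.pi / L)) ≠ 0 := by
      simp [Complex.I_ne_zero, hm, Real.pi_ne_zero, hL.ne']
    have hexp : ∀ u : ℝ, Complex.exp (Complex.I * ((m * (2 * Real.pi / L) * u : ℝ) : ℂ))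
        = Complex.exp (Complex.I * (m * (2 * Real.pi / L)) * u) := fun u => by
      push_cast; ring_nf
    simp_rw [hexp]
    rw [integral_exp_mul_complex hc, div_eq_zero_iff, sub_eq_zero]
    left
    have hmL :
        Complex.I * (m * (2 * Real.pi / L)) * (L : ℝ) = m * (2 * Real.pi * Complex.I) := by
      have hL' : (L : ℂ) ≠ 0 := by exact_mod_cast hL.ne'
      field_simp
    rw [hmL, Complex.exp_int_mul_two_pi_mul_I]
    simp

theorem conj_detOrbital_mul_detOrbital (N : ℕ) {ρ : EuclideanSpace ℝ (Fin 3) → ℝ}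
    (M : ℝ → ℝ) (S : EuclideanSpace ℝ (Fin 3) → ℝ) (k l : ℕ) {x : EuclideanSpace ℝ (Fin 3)}
    (hx : 0 ≤ ρ x) :
    (starRingEnd ℂ) (detOrbital N ρ M S k x) * detOrbital N ρ M S l x
      = ((ρ x / N : ℝ) : ℂ) *
        Complex.exp (Complex.I * ((((l : ℝ) - k) * detPhase N ρ (x 0) : ℝ) : ℂ)) := by
  rw [detOrbital, detOrbital, map_mul, Complex.conj_ofReal, ← Complex.exp_conj, map_mul,
    Complex.conj_I, Complex.conj_ofReal, mul_mul_mul_comm, ← Complex.exp_add,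
    ← Complex.ofReal_mul, Real.mul_self_sqrt (div_nonneg hx (Nat.cast_nonneg N))]
  congr 2
  push_cast
  ring

theorem stmt13_general (N : ℕ) (ρ : EuclideanSpace ℝ (Fin 3) → ℝ)
    (M : ℝ → ℝ) (S : EuclideanSpace ℝ (Fin 3) → ℝ)
    (hρnn : ∀ x, 0 ≤ ρ x) (hρi : Integrable ρ volume)
    (hρN : (∫ x, ρ x) = N) :
    ∀ k l : ℕ, k < N → l < N →
      (∫ x, (starRingEnd ℂ) (detOrbital N ρ M S k x) * detOrbital N ρ M S l x)
        = if k = l then 1 else 0 := by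
  intro k l hk _
  have hN : (0 : ℝ) < N := by exact_mod_cast (Nat.zero_le k).trans_lt hk
  set g : ℝ → ℂ := fun u =>
    Complex.exp (Complex.I * (((l - k : ℤ) : ℝ) * (2 * Real.pi / N) * u : ℝ))
  have hpoint : ∀ x : EuclideanSpace ℝ (Fin 3),
      (starRingEnd ℂ) (detOrbital N ρ M S k x) * detOrbital N ρ M S l x
        = (N : ℂ)⁻¹ * (ρ x • g (∫ y in {y : EuclideanSpace ℝ (Fin 3) | y 0 ≤ x 0}, ρ y)) := by
    intro x
    rw [conj_detOrbital_mul_detOrbital N M S k l (hρnn x), detPhase, Complex.real_smul]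
    simp only [g]
    push_cast
    ring_nf
  have hp : Measurable fun x : EuclideanSpace ℝ (Fin 3) => x 0 := by fun_prop
  calc _ = (N : ℂ)⁻¹ * ∫ u in Icc 0 (N : ℝ), g u := by
        simp_rw [hpoint]
        rw [integral_const_mul, integral_smul_comp_integral_setOf_le hp
          (EuclideanSpace.volume_setOf_apply_eq 0) hρi (ae_of_all _ hρnn)
          (by fun_prop : Continuous g).aestronglyMeasurable, hρN]
    _ = if k = l then 1 else 0 := by
        rw [integral_Icc_exp_int_mul _ hN]
        by_cases hkl : k = l
        · simp [hkl, inv_mul_cancel₀ (by exact_mod_cast hN.ne' : (N : ℂ) ≠ 0)]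
        · have : (l : ℤ) - k ≠ 0 := sub_ne_zero.2 (by exact_mod_cast Ne.symm hkl)
          simp [hkl, this]

/-- If `ρ ≥ 0`, `∫ ρ = N`, then the orbitals `φ_k`, `k = 0, …, N−1`, are orthonormal in
`L²(ℝ³)`: `(φ_k, φ_l) = δ_{kl}`. -/
theorem stmt13 (N : ℕ) (hN : 1 ≤ N) (ρ : EuclideanSpace ℝ (Fin 3) → ℝ)
    (M : ℝ → ℝ) (S : EuclideanSpace ℝ (Fin 3) → ℝ)
    (hρm : Measurable ρ) (hρnn : ∀ x, 0 ≤ ρ x) (hρi : Integrable ρ volume)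
    (hρN : (∫ x, ρ x) = N) (hM : Measurable M) (hS : Measurable S) :
    ∀ k l : ℕ, k < N → l < N →
      (∫ x, (starRingEnd ℂ) (detOrbital N ρ M S k x) * detOrbital N ρ M S l x)
        = if k = l then 1 else 0 :=
  stmt13_general N ρ M S hρnn hρi hρN
end
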